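/- arXiv:2005.06890 — 2 statements merged into one kernel-verified Lean document; each statement's English description precedes it below -/
import Mathlib

section
/- Let E be a nondegenerate closed segment in ℝ with endpoints a < b, and let k ≥ 0 be an integer. For any real values r_a, r_b and any polynomial r_E of degree ≤ k−1 on E (with the convention that polynomials of degree ≤ −1 are zero), there exists a unique polynomial γ ∈ ℙ^{k+1}(E) such that γ(a) = r_a, γ(b) = r_b, and the L²(E)-orthogonal projection of γ onto ℙ^{k−1}(E) equals r_E. -/
/-!
The map `γ ↦ (γ(a), γ(b), q ↦ ∫_a^b γ q)` from `ℙ^{k+1}` to `ℝ × ℝ × (ℙ^{k-1})*` is linear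
between spaces of the same dimension `k + 2`, so it suffices to show that it is injective.
If `γ` vanishes at `a` and `b`, then `γ = (X - a)(X - b) h` with `deg h < k`; testing the
orthogonality against `q = h` gives `∫_a^b (x - a)(b - x) h(x)² dx = 0`, which forces `h = 0`.
-/

open Polynomial intervalIntegral
open MeasureTheory Module

namespace Polynomial

lemma mem_degreeLT_of_mul_mem {R : Type*} [Semiring R] [NoZeroDivisors R] {p h : R[X]}
    (hp : p ≠ 0) {n : ℕ} (hph : p * h ∈ degreeLT R (n + p.natDegree)) : h ∈ degreeLT R n := by
  rcases eq_or_ne h 0 with rfl | hh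
  · exact zero_mem _
  rw [mem_degreeLT, ← natDegree_lt_iff_degree_lt (mul_ne_zero hp hh), natDegree_mul hp hh] at hph
  rw [mem_degreeLT, ← natDegree_lt_iff_degree_lt hh]
  omega

lemma mul_X_sub_C_dvd_of_isRoot {K : Type*} [Field K] {p : K[X]} {a b : K} (hab : a ≠ b)
    (ha : p.IsRoot a) (hb : p.IsRoot b) : (X - C a) * (X - C b) ∣ p :=
  (isCoprime_X_sub_C_of_isUnit_sub (sub_ne_zero.2 hab).isUnit).mul_dvd
    (dvd_iff_isRoot.2 ha) (dvd_iff_isRoot.2 hb)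

instance finite_degreeLT (R : Type*) [Semiring R] (n : ℕ) : Module.Finite R (degreeLT R n) :=
  Module.Finite.equiv (degreeLTEquiv R n).symm

lemma finrank_degreeLT (R : Type*) [Semiring R] [StrongRankCondition R] (n : ℕ) :
    finrank R (degreeLT R n) = n :=
  (degreeLTEquiv R n).finrank_eq.trans (finrank_fin_fun R)

lemma intervalIntegrable_eval_mul_eval (a b : ℝ) (p q : ℝ[X]) :
    IntervalIntegrable (fun x => p.eval x * q.eval x) volume a b :=
  (p.continuous.mul q.continuous).intervalIntegrable a b

noncomputable def l2Pairing (a b : ℝ) : ℝ[X] →ₗ[ℝ] ℝ[X] →ₗ[ℝ] ℝ :=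
  LinearMap.mk₂ ℝ (fun p q => ∫ x in a..b, p.eval x * q.eval x)
    (fun p p' q => by
      simp only [eval_add, add_mul]
      exact integral_add (intervalIntegrable_eval_mul_eval a b p q)
        (intervalIntegrable_eval_mul_eval a b p' q))
    (fun c p q => by
      simp only [eval_smul, smul_eq_mul, mul_assoc, intervalIntegral.integral_const_mul])
    (fun p q q' => by
      simp only [eval_add, mul_add]
      exact integral_add (intervalIntegrable_eval_mul_eval a b p q)
        (intervalIntegrable_eval_mul_eval a b p q'))
    (fun c p q => by
      simp only [eval_smul, smul_eq_mul, mul_left_comm, intervalIntegral.integral_const_mul])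

@[simp] lemma l2Pairing_apply (a b : ℝ) (p q : ℝ[X]) :
    l2Pairing a b p q = ∫ x in a..b, p.eval x * q.eval x := rfl

lemma l2Pairing_sub_left (a b : ℝ) (p r q : ℝ[X]) :
    l2Pairing a b p q - l2Pairing a b r q = ∫ x in a..b, (p.eval x - r.eval x) * q.eval x := by
  rw [← LinearMap.sub_apply, ← map_sub, l2Pairing_apply]
  simp only [eval_sub]

lemma integral_eval_pos {p : ℝ[X]} (hp : p ≠ 0) {a b : ℝ} (hab : a < b)
    (hnonneg : ∀ x ∈ Set.Icc a b, 0 ≤ p.eval x) : 0 < ∫ x in a..b, p.eval x := by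
  obtain ⟨c, hc, hpc⟩ : ∃ c ∈ Set.Ioo a b, ¬ p.IsRoot c :=
    ((Set.Ioo_infinite hab).sdiff (finite_setOfPred_isRoot hp)).nonempty
  refine integral_pos hab p.continuous.continuousOn
    (fun x hx => hnonneg x (Set.Ioc_subset_Icc_self hx)) ⟨c, Set.Ioo_subset_Icc_self hc, ?_⟩
  exact (hnonneg c (Set.Ioo_subset_Icc_self hc)).lt_of_ne' hpc

lemma eq_zero_of_isRoot_of_l2Pairing_eq_zero {k : ℕ} {a b : ℝ} (hab : a < b) {γ : ℝ[X]}
    (hγ : γ ∈ degreeLT ℝ (k + 2)) (ha : γ.IsRoot a) (hb : γ.IsRoot b)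
    (horth : ∀ q ∈ degreeLT ℝ k, l2Pairing a b γ q = 0) : γ = 0 := by
  obtain ⟨h, rfl⟩ := mul_X_sub_C_dvd_of_isRoot hab.ne ha hb
  by_contra hγ0
  have hh : h ≠ 0 := right_ne_zero_of_mul hγ0
  have hdeg : h ∈ degreeLT ℝ k := by
    refine mem_degreeLT_of_mul_mem (left_ne_zero_of_mul hγ0) ?_
    rwa [natDegree_mul (X_sub_C_ne_zero a) (X_sub_C_ne_zero b), natDegree_X_sub_C,
      natDegree_X_sub_C]
  set w := (X - C a) * (C b - X) * h ^ 2
  have hw : w ≠ 0 := mul_ne_zero (mul_ne_zero (X_sub_C_ne_zero a)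
    (by rw [← neg_sub]; exact neg_ne_zero.2 (X_sub_C_ne_zero b))) (pow_ne_zero 2 hh)
  have hpos : 0 < ∫ x in a..b, w.eval x := integral_eval_pos hw hab fun x hx => by
    have : 0 ≤ x - a := sub_nonneg.2 hx.1
    have : 0 ≤ b - x := sub_nonneg.2 hx.2
    simp only [w, eval_mul, eval_sub, eval_pow, eval_X, eval_C]
    positivity
  -- `γ * h = -w`, so orthogonality to `h` forces the positive integral of `w` to vanish
  have hzero : ∫ x in a..b, w.eval x = 0 := by
    have := horth h hdeg
    rw [l2Pairing_apply, ← neg_eq_zero, ← intervalIntegral.integral_neg] at this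
    rw [← this]
    congr 1 with x
    simp only [w, eval_mul, eval_sub, eval_pow, eval_X, eval_C]
    ring
  exact hpos.ne' hzero

end Polynomial

noncomputable def endpointMomentMap (a b : ℝ) (k : ℕ) :
    degreeLT ℝ (k + 2) →ₗ[ℝ] ℝ × ℝ × Dual ℝ (degreeLT ℝ k) :=
  ((leval a).comp (degreeLT ℝ (k + 2)).subtype).prod
    (((leval b).comp (degreeLT ℝ (k + 2)).subtype).prod
      ((l2Pairing a b).compl₁₂ (degreeLT ℝ (k + 2)).subtype (degreeLT ℝ k).subtype))

lemma endpointMomentMap_eq_iff (a b : ℝ) (k : ℕ) (γ : degreeLT ℝ (k + 2)) (ra rb : ℝ)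
    (rE : ℝ[X]) :
    endpointMomentMap a b k γ = (ra, rb, (l2Pairing a b rE).comp (degreeLT ℝ k).subtype) ↔
      (γ : ℝ[X]).eval a = ra ∧ (γ : ℝ[X]).eval b = rb ∧
        ∀ q ∈ degreeLT ℝ k, ∫ x in a..b, ((γ : ℝ[X]).eval x - rE.eval x) * q.eval x = 0 := by
  simp only [endpointMomentMap, LinearMap.prod_apply, Function.prod, Prod.mk.injEq,
    LinearMap.ext_iff, ← l2Pairing_sub_left, sub_eq_zero, Subtype.forall]
  rfl

lemma endpointMomentMap_bijective {a b : ℝ} (hab : a < b) (k : ℕ) :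
    Function.Bijective (endpointMomentMap a b k) := by
  have hinj : Function.Injective (endpointMomentMap a b k) := by
    refine (injective_iff_map_eq_zero _).2 fun γ hγ => Subtype.ext ?_
    simp only [endpointMomentMap, LinearMap.prod_apply, Function.prod, Prod.mk_eq_zero,
      LinearMap.ext_iff, Subtype.forall] at hγ
    exact eq_zero_of_isRoot_of_l2Pairing_eq_zero hab γ.2 hγ.1 hγ.2.1 hγ.2.2
  refine ⟨hinj, (LinearMap.injective_iff_surjective_of_finrank_eq_finrank ?_).1 hinj⟩
  rw [finrank_prod, finrank_prod, Subspace.dual_finrank_eq, finrank_degreeLT, finrank_degreeLT,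
    finrank_self]
  ring

theorem stmt1_general (k : ℕ) (a b : ℝ) (hab : a < b) (ra rb : ℝ)
    (rE : Polynomial ℝ) :
    ∃! γ : Polynomial ℝ, γ ∈ Polynomial.degreeLT ℝ (k + 2) ∧
      γ.eval a = ra ∧ γ.eval b = rb ∧
      ∀ q ∈ Polynomial.degreeLT ℝ k,
        (∫ x in a..b, (γ.eval x - rE.eval x) * q.eval x) = 0 := by
  obtain ⟨hinj, hsurj⟩ := endpointMomentMap_bijective hab k
  obtain ⟨γ, hγ⟩ := hsurj (ra, rb, (l2Pairing a b rE).comp (degreeLT ℝ k).subtype)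
  refine ⟨γ, ⟨γ.2, (endpointMomentMap_eq_iff a b k γ ra rb rE).1 hγ⟩, ?_⟩
  rintro p ⟨hp, hcond⟩
  exact congrArg Subtype.val
    (hinj (((endpointMomentMap_eq_iff a b k ⟨p, hp⟩ ra rb rE).2 hcond).trans hγ.symm))

theorem stmt1 (k : ℕ) (a b : ℝ) (hab : a < b) (ra rb : ℝ)
    (rE : Polynomial ℝ) (hrE : rE ∈ Polynomial.degreeLT ℝ k) :
    ∃! γ : Polynomial ℝ, γ ∈ Polynomial.degreeLT ℝ (k + 2) ∧
      γ.eval a = ra ∧ γ.eval b = rb ∧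
      ∀ q ∈ Polynomial.degreeLT ℝ k,
        (∫ x in a..b, (γ.eval x - rE.eval x) * q.eval x) = 0 :=
  stmt1_general k a b hab ra rb rE
end

section
/- Let T ⊂ ℝ³ be a bounded open set of diameter 1 that contains a ball of radius ρ > 0 and is contained in the unit ball centered at the same point. For every integer ℓ ≥ 0 there exists a constant C, depending only on ℓ and ρ, such that for all r ∈ 𝒢^{ℓ+1}(T)^⊥ one has ‖r‖_{L²(T)³} ≤ C ‖curl r‖_{L²(T)³}. -/
/- STATEMENT 3: For T ⊂ ℝ³ bounded open of diameter 1 with B(x₀,ρ) ⊆ T ⊆ B(x₀,1),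
and ℓ ≥ 0, there is C = C(ℓ,ρ) such that ‖r‖_{L²(T)³} ≤ C ‖curl r‖_{L²(T)³}
for all r ∈ 𝒢^{ℓ+1}(T)^⊥ (the L²(T)³-orthogonal complement of
𝒢^{ℓ+1}(T) = grad ℙ^{ℓ+2}(T) in ℙ^{ℓ+1}(T)³). -/

noncomputable section
open MvPolynomial MeasureTheory

/-- ℙ^m: trivariate polynomials of total degree ≤ m. -/
abbrev P3 (m : ℕ) : Submodule ℝ (MvPolynomial (Fin 3) ℝ) :=
  MvPolynomial.restrictTotalDegree (Fin 3) ℝ m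

/-- Gradient of a scalar polynomial. -/
def pgrad (p : MvPolynomial (Fin 3) ℝ) : Fin 3 → MvPolynomial (Fin 3) ℝ :=
  fun i => pderiv i p

/-- Curl of a polynomial vector field. -/
def pcurl (v : Fin 3 → MvPolynomial (Fin 3) ℝ) : Fin 3 → MvPolynomial (Fin 3) ℝ :=
  fun i => pderiv (i + 1) (v (i + 2)) - pderiv (i + 2) (v (i + 1))

/-- 𝒢^m(T) = grad ℙ^{m+1}(T). -/
def Gspace (m : ℕ) : Set (Fin 3 → MvPolynomial (Fin 3) ℝ) :=
  {v | ∃ p ∈ P3 (m + 1), v = pgrad p}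

/-- 𝒢^m(T)^⊥: L²(T)³-orthogonal complement of 𝒢^m(T) in ℙ^m(T)³. -/
def GspacePerp (T : Set (EuclideanSpace ℝ (Fin 3))) (m : ℕ) :
    Set (Fin 3 → MvPolynomial (Fin 3) ℝ) :=
  {v | (∀ i, v i ∈ P3 m) ∧ ∀ w ∈ Gspace m,
    (∫ x in T, ∑ i, MvPolynomial.eval (fun j => x j) (v i) *
      MvPolynomial.eval (fun j => x j) (w i)) = 0}

/-- Squared L²(T)³ norm of a polynomial vector field. -/
def sqL2 (T : Set (EuclideanSpace ℝ (Fin 3))) (v : Fin 3 → MvPolynomial (Fin 3) ℝ) : ℝ :=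
  ∫ x in T, ∑ i, (MvPolynomial.eval (fun j => x j) (v i)) ^ 2

/-!
After translating by `x₀` we may assume `ball 0 ρ ⊆ T ⊆ ball 0 1`. Split `r = g + s` with `g`
a polynomial gradient and `s` orthogonal to all such gradients in `L²(ball 0 ρ)`. As `r` is
orthogonal to `g` in `L²(T)`, `‖r‖_T ≤ ‖s‖_T ≤ ‖s‖_{B₁}`. A curl-free polynomial field is the
gradient of a polynomial of one degree more, so `s ↦ ‖curl s‖_{B_ρ}` is a norm on the
finite-dimensional space of such `s`; by equivalence of norms
`‖s‖_{B₁} ≤ C ‖curl s‖_{B_ρ} = C ‖curl r‖_{B_ρ} ≤ C ‖curl r‖_T`, with `C` depending on `ℓ` and `ρ`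
only.
-/

namespace MvPolynomial

variable {σ : Type*}

section Calculus

variable {R : Type*} [CommSemiring R]

theorem pderiv_pderiv_comm (i j : σ) (p : MvPolynomial σ R) :
    pderiv i (pderiv j p) = pderiv j (pderiv i p) := by
  classical
  ext m
  rcases eq_or_ne i j with rfl | hij
  · rfl
  simp only [coeff_pderiv, Finsupp.add_apply, Finsupp.single_apply, if_neg hij,
    if_neg hij.symm, add_zero, add_right_comm m (Finsupp.single i 1)]
  ring

theorem pderiv_mem_restrictTotalDegree {i : σ} {d : ℕ} {p : MvPolynomial σ R}
    (hp : p ∈ restrictTotalDegree σ R (d + 1)) : pderiv i p ∈ restrictTotalDegree σ R d := by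
  classical
  rw [mem_restrictTotalDegree] at hp ⊢
  refine Finset.sup_le fun m hm => ?_
  have hcoeff : coeff (m + Finsupp.single i 1) p ≠ 0 := fun h =>
    mem_support_iff.1 hm (by rw [coeff_pderiv, h, zero_mul])
  have := (le_totalDegree (mem_support_iff.2 hcoeff)).trans hp
  rw [Finsupp.sum_add_index' (fun _ => rfl) (fun _ _ _ => rfl),
    Finsupp.sum_single_index rfl] at this
  exact Nat.le_of_add_le_add_right this

end Calculus

section Antiderivative

variable {K : Type*} [Field K]

def antideriv (i : σ) (p : MvPolynomial σ K) : MvPolynomial σ K :=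
  ∑ s ∈ p.support, monomial (s + Finsupp.single i 1) (coeff s p / (s i + 1))

theorem pderiv_antideriv [CharZero K] (i : σ) (p : MvPolynomial σ K) :
    pderiv i (antideriv i p) = p := by
  classical
  conv_rhs => rw [p.as_sum]
  rw [antideriv, map_sum]
  refine Finset.sum_congr rfl fun s _ => ?_
  rw [pderiv_monomial, add_tsub_cancel_right, Finsupp.add_apply, Finsupp.single_eq_same,
    Nat.cast_add, Nat.cast_one, div_mul_cancel₀ _ (Nat.cast_add_one_ne_zero _)]

theorem eq_zero_of_mem_support_of_pderiv_eq_zero [CharZero K] {j : σ} {p : MvPolynomial σ K}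
    (h : pderiv j p = 0) {s : σ →₀ ℕ} (hs : s ∈ p.support) : s j = 0 := by
  classical
  by_contra hsj
  have hle : Finsupp.single j 1 ≤ s := Finsupp.single_le_iff.2 (Nat.one_le_iff_ne_zero.2 hsj)
  have := congrArg (coeff (s - Finsupp.single j 1)) h
  rw [coeff_pderiv, tsub_add_cancel_of_le hle, coeff_zero] at this
  exact mem_support_iff.1 hs ((mul_eq_zero.1 this).resolve_right (Nat.cast_add_one_ne_zero _))

theorem pderiv_antideriv_of_ne [CharZero K] {i j : σ} (hji : j ≠ i) {p : MvPolynomial σ K}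
    (h : pderiv j p = 0) : pderiv j (antideriv i p) = 0 := by
  classical
  rw [antideriv, map_sum]
  refine Finset.sum_eq_zero fun s hs => ?_
  rw [pderiv_monomial, Finsupp.add_apply, Finsupp.single_eq_of_ne hji,
    eq_zero_of_mem_support_of_pderiv_eq_zero h hs, add_zero, Nat.cast_zero, mul_zero,
    monomial_zero]

theorem antideriv_mem_restrictTotalDegree (i : σ) {d : ℕ} {p : MvPolynomial σ K}
    (hp : p ∈ restrictTotalDegree σ K d) : antideriv i p ∈ restrictTotalDegree σ K (d + 1) := by
  refine Submodule.sum_mem _ fun s hs => ?_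
  rw [mem_restrictTotalDegree] at hp ⊢
  refine (totalDegree_monomial_le _ _).trans ?_
  rw [Finsupp.sum_add_index' (fun _ => rfl) (fun _ _ _ => rfl), Finsupp.sum_single_index rfl]
  exact Nat.add_le_add_right ((le_totalDegree hs).trans hp) 1

theorem exists_mem_restrictTotalDegree_pderiv_eq_of_forall_notMem [CharZero K] {d : ℕ}
    (S : Finset σ) {v : σ → MvPolynomial σ K} (hS : ∀ j ∉ S, v j = 0)
    (hv : ∀ i, v i ∈ restrictTotalDegree σ K d)
    (hsymm : ∀ i j, pderiv i (v j) = pderiv j (v i)) :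
    ∃ p ∈ restrictTotalDegree σ K (d + 1), ∀ i, pderiv i p = v i := by
  classical
  induction S using Finset.induction_on generalizing v with
  | empty => exact ⟨0, zero_mem _, fun i => by rw [map_zero, hS i (Finset.notMem_empty i)]⟩
  | insert i S _ ih =>
    set q := antideriv i (v i)
    have hq : q ∈ restrictTotalDegree σ K (d + 1) := antideriv_mem_restrictTotalDegree i (hv i)
    have hqi : pderiv i q = v i := pderiv_antideriv i (v i)
    -- `v i` does not depend on the variables where `v` vanishes, by symmetry of the Jacobian.
    have hqj : ∀ j ∉ insert i S, pderiv j q = 0 := fun j hj =>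
      pderiv_antideriv_of_ne (by rintro rfl; exact hj (Finset.mem_insert_self _ _))
        (by rw [← hsymm, hS j hj, map_zero])
    have hw : ∀ j ∉ S, v j - pderiv j q = 0 := by
      intro j hj
      by_cases hji : j = i
      · rw [hji, hqi, sub_self]
      · have hj' : j ∉ insert i S := by simp [hji, hj]
        rw [hS j hj', hqj j hj', sub_self]
    obtain ⟨p, hp, hpv⟩ := ih hw (fun j => sub_mem (hv j) (pderiv_mem_restrictTotalDegree hq))
      (fun j k => by simp only [map_sub, hsymm j k, pderiv_pderiv_comm j k])
    exact ⟨q + p, add_mem hq hp, fun j => by rw [map_add, hpv, add_sub_cancel]⟩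

theorem exists_mem_restrictTotalDegree_pderiv_eq [Fintype σ] [CharZero K] {d : ℕ}
    {v : σ → MvPolynomial σ K} (hv : ∀ i, v i ∈ restrictTotalDegree σ K d)
    (hsymm : ∀ i j, pderiv i (v j) = pderiv j (v i)) :
    ∃ p ∈ restrictTotalDegree σ K (d + 1), ∀ i, pderiv i p = v i :=
  exists_mem_restrictTotalDegree_pderiv_eq_of_forall_notMem Finset.univ
    (fun j hj => absurd (Finset.mem_univ j) hj) hv hsymm

end Antiderivative

section Shift

variable {R : Type*} [CommRing R]

def shift (c : σ → R) : MvPolynomial σ R →ₐ[R] MvPolynomial σ R :=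
  aeval fun i => X i + C (c i)

theorem eval_shift (c x : σ → R) (p : MvPolynomial σ R) :
    eval x (shift c p) = eval (x + c) p := by
  induction p using MvPolynomial.induction_on with
  | C a => simp [shift]
  | add p q hp hq => simp only [map_add, hp, hq]
  | mul_X p i hp => rw [map_mul, eval_mul, hp]; simp [shift]

theorem shift_shift_neg (c : σ → R) (p : MvPolynomial σ R) : shift c (shift (-c) p) = p := by
  rw [shift, shift, ← AlgHom.comp_apply, comp_aeval]
  simp

theorem pderiv_shift (c : σ → R) (i : σ) (p : MvPolynomial σ R) :
    pderiv i (shift c p) = shift c (pderiv i p) := by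
  classical
  induction p using MvPolynomial.induction_on with
  | C a => simp [shift]
  | add p q hp hq => simp only [map_add, hp, hq]
  | mul_X p j hp =>
    rw [map_mul, pderiv_mul, pderiv_mul, hp, map_add, map_mul, map_mul]
    rcases eq_or_ne j i with rfl | hji <;> simp [shift, pderiv_X, *]

theorem shift_mem_restrictTotalDegree (c : σ → R) {d : ℕ} {p : MvPolynomial σ R}
    (hp : p ∈ restrictTotalDegree σ R d) : shift c p ∈ restrictTotalDegree σ R d := by
  rw [p.as_sum, map_sum]
  refine Submodule.sum_mem _ fun s hs => ?_
  rw [shift, aeval_monomial, mem_restrictTotalDegree]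
  refine (totalDegree_mul _ _).trans ?_
  rw [algebraMap_eq, totalDegree_C, zero_add]
  refine (totalDegree_finsetProd _ _).trans ((Finset.sum_le_sum fun i _ => ?_).trans
    ((le_totalDegree hs).trans ((mem_restrictTotalDegree _ _ _).1 hp)))
  refine (totalDegree_pow _ _).trans ((Nat.mul_le_mul_left _ ?_).trans_eq (mul_one _))
  refine (totalDegree_add _ _).trans (max_le ?_ ((totalDegree_C _).trans_le zero_le_one))
  exact (totalDegree_monomial_le (Finsupp.single i 1) 1).trans_eq (by simp)

end Shift

theorem eq_zero_of_eval_eq_zero_of_isOpen [Fintype σ] {p : MvPolynomial σ ℝ}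
    {U : Set (σ → ℝ)} (hU : IsOpen U) (hne : U.Nonempty) (h : ∀ x ∈ U, eval x p = 0) :
    p = 0 := by
  obtain ⟨x, hx⟩ := hne
  obtain ⟨ε, hε, hball⟩ := Metric.isOpen_iff.1 hU x hx
  refine funext_set (fun i => Metric.ball (x i) ε) (fun i => ?_) fun y hy => ?_
  · rw [Real.ball_eq_Ioo]; exact Set.Ioo_infinite (by linarith)
  · rw [map_zero, h y (hball (by rwa [ball_pi x hε]))]

end MvPolynomial

namespace LinearMap.BilinForm

theorem exists_sub_mem_orthogonal {K V : Type*} [Field K] [AddCommGroup V] [Module K V]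
    {B : LinearMap.BilinForm K V} {G : Submodule K V} [FiniteDimensional K G]
    (hG : ∀ g ∈ G, B g g = 0 → g = 0) (v : V) : ∃ g ∈ G, v - g ∈ B.orthogonal G := by
  have hnd : (B.restrict G).flip.Nondegenerate := by
    refine Nondegenerate.flip ⟨fun g hg => ?_, fun g hg => ?_⟩ <;>
      exact Subtype.ext (hG g g.2 (hg g))
  obtain ⟨g, hg⟩ := ((B.restrict G).flip.toDual hnd).surjective ((B.flip v).domRestrict G)
  refine ⟨g, g.2, fun n hn => ?_⟩
  have := LinearMap.congr_fun hg ⟨n, hn⟩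
  simp only [toDual_def, flip_apply, restrict_apply, domRestrict_apply] at this
  rw [map_sub, this, sub_self]

theorem apply_self_le_apply_sub_self {R M : Type*} [CommRing R] [PartialOrder R]
    [IsOrderedRing R] [AddCommGroup M] [Module R M] {B : LinearMap.BilinForm R M}
    (hB : B.IsSymm) {r g : M} (hrg : B r g = 0) (hg : 0 ≤ B g g) :
    B r r ≤ B (r - g) (r - g) := by
  have hgr : B g r = 0 := by rw [← hB.eq, hrg]
  simp only [map_sub, LinearMap.sub_apply, hrg, hgr]
  rwa [sub_zero, zero_sub, sub_neg_eq_add, le_add_iff_nonneg_right]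

theorem exists_apply_self_le_mul {M : Type*} [AddCommGroup M] [Module ℝ M]
    [FiniteDimensional ℝ M] (B₁ B₂ : LinearMap.BilinForm ℝ M) (h₂ : B₂.IsSymm)
    (h₂nonneg : ∀ v, 0 ≤ B₂ v v) (h₂def : ∀ v, B₂ v v = 0 → v = 0) :
    ∃ C : ℝ, 0 < C ∧ ∀ v, B₁ v v ≤ C * B₂ v v := by
  let core : InnerProductSpace.Core ℝ M :=
    { inner := fun v w => B₂ v w
      conj_inner_symm := fun v w => h₂.eq w v
      re_inner_nonneg := h₂nonneg
      definite := h₂def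
      add_left := fun u v w => by simp only [map_add, LinearMap.add_apply]
      smul_left := fun u v c => by simp [map_smul] }
  let _ : NormedAddCommGroup M := core.toNormedAddCommGroup
  let _ : NormedSpace ℝ M := InnerProductSpace.Core.toNormedSpace (c := core.toCore)
  let _ : InnerProductSpace ℝ M := InnerProductSpace.ofCore core.toCore
  let B₁c : M →L[ℝ] M →L[ℝ] ℝ :=
    (LinearMap.toContinuousLinearMap.toLinearMap ∘ₗ B₁).toContinuousLinearMap
  refine ⟨‖B₁c‖ + 1, by positivity, fun v => ?_⟩
  have hv : B₂ v v = ‖v‖ * ‖v‖ := real_inner_self_eq_norm_mul_norm v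
  calc B₁ v v ≤ ‖B₁c v v‖ := Real.le_norm_self _
    _ ≤ ‖B₁c‖ * ‖v‖ * ‖v‖ := B₁c.le_opNorm₂ v v
    _ ≤ (‖B₁c‖ + 1) * B₂ v v := by rw [hv, mul_assoc]; gcongr; linarith

end LinearMap.BilinForm

section L2

variable {σ ι : Type*} [Fintype ι]

theorem continuous_eval_ofLp (p : MvPolynomial σ ℝ) :
    Continuous fun x : EuclideanSpace ℝ σ => eval (fun j => x j) p :=
  (continuous_eval p).comp (PiLp.continuous_ofLp 2 _)

variable [Fintype σ]

def l2Inner (S : Set (EuclideanSpace ℝ σ)) (v w : ι → MvPolynomial σ ℝ) : ℝ :=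
  ∫ x in S, ∑ i, eval (fun j => x j) (v i) * eval (fun j => x j) (w i)

theorem integrableOn_l2Inner_integrand {S : Set (EuclideanSpace ℝ σ)}
    (hS : Bornology.IsBounded S) (v w : ι → MvPolynomial σ ℝ) :
    IntegrableOn (fun x => ∑ i, eval (fun j => x j) (v i) * eval (fun j => x j) (w i)) S :=
  ((continuous_finsetSum _ fun i _ => (continuous_eval_ofLp (v i)).mul
    (continuous_eval_ofLp (w i))).continuousOn.integrableOn_compact
    hS.isCompact_closure).mono_set subset_closure

theorem l2Inner_comm (S : Set (EuclideanSpace ℝ σ)) (v w : ι → MvPolynomial σ ℝ) :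
    l2Inner S v w = l2Inner S w v := by
  simp only [l2Inner, mul_comm]

def l2Form (S : Set (EuclideanSpace ℝ σ)) (hS : Bornology.IsBounded S) :
    LinearMap.BilinForm ℝ (ι → MvPolynomial σ ℝ) :=
  LinearMap.mk₂ ℝ (l2Inner S)
    (fun u v w => by
      simp only [l2Inner, Pi.add_apply, map_add, add_mul, Finset.sum_add_distrib]
      exact integral_add (integrableOn_l2Inner_integrand hS u w)
        (integrableOn_l2Inner_integrand hS v w))
    (fun c v w => by
      simp only [l2Inner, Pi.smul_apply, smul_eval, mul_assoc, ← Finset.mul_sum, smul_eq_mul]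
      exact integral_const_mul c _)
    (fun u v w => by
      simp only [l2Inner, Pi.add_apply, map_add, mul_add, Finset.sum_add_distrib]
      exact integral_add (integrableOn_l2Inner_integrand hS u v)
        (integrableOn_l2Inner_integrand hS u w))
    (fun c v w => by
      simp only [l2Inner, Pi.smul_apply, smul_eval, mul_left_comm _ c, ← Finset.mul_sum,
        smul_eq_mul]
      exact integral_const_mul c _)

theorem l2Form_isSymm {S : Set (EuclideanSpace ℝ σ)} (hS : Bornology.IsBounded S) :
    (l2Form (ι := ι) S hS).IsSymm :=
  ⟨fun v w => l2Inner_comm S v w⟩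

theorem l2Inner_self_nonneg (S : Set (EuclideanSpace ℝ σ)) (v : ι → MvPolynomial σ ℝ) :
    0 ≤ l2Inner S v v :=
  setIntegral_nonneg_of_ae_restrict
    (.of_forall fun _ => Finset.sum_nonneg fun _ _ => mul_self_nonneg _)

theorem l2Inner_self_mono {S S' : Set (EuclideanSpace ℝ σ)} (hSS' : S ⊆ S')
    (hS' : Bornology.IsBounded S') (v : ι → MvPolynomial σ ℝ) :
    l2Inner S v v ≤ l2Inner S' v v :=
  setIntegral_mono_set (integrableOn_l2Inner_integrand hS' v v)
    (.of_forall fun _ => Finset.sum_nonneg fun _ _ => mul_self_nonneg _) hSS'.eventuallyLE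

theorem eq_zero_of_l2Inner_self_eq_zero {S : Set (EuclideanSpace ℝ σ)} (hSo : IsOpen S)
    (hne : S.Nonempty) (hSb : Bornology.IsBounded S) {v : ι → MvPolynomial σ ℝ}
    (h : l2Inner S v v = 0) : v = 0 := by
  have hae := (setIntegral_eq_zero_iff_of_nonneg_ae (.of_forall fun _ =>
    Finset.sum_nonneg fun _ _ => mul_self_nonneg _) (integrableOn_l2Inner_integrand hSb v v)).1 h
  have hS0 := Measure.eqOn_open_of_ae_eq hae hSo (continuous_finsetSum _ fun i _ =>
    (continuous_eval_ofLp (v i)).mul (continuous_eval_ofLp (v i))).continuousOn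
    continuousOn_const
  obtain ⟨x₀, hx₀⟩ := hne
  funext i
  refine MvPolynomial.eq_zero_of_eval_eq_zero_of_isOpen
    (hSo.preimage (PiLp.continuous_toLp 2 _)) ⟨WithLp.ofLp x₀, hx₀⟩ fun x hx => ?_
  exact mul_self_eq_zero.1 ((Finset.sum_eq_zero_iff_of_nonneg fun _ _ => mul_self_nonneg _).1
    (hS0 hx) i (Finset.mem_univ i))

theorem l2Inner_preimage_add_right (S : Set (EuclideanSpace ℝ σ)) (x₀ : EuclideanSpace ℝ σ)
    (v w : ι → MvPolynomial σ ℝ) :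
    l2Inner ((· + x₀) ⁻¹' S) (shift (WithLp.ofLp x₀) ∘ v) (shift (WithLp.ofLp x₀) ∘ w) =
      l2Inner S v w := by
  rw [l2Inner, l2Inner]
  conv_rhs => rw [← (measurePreserving_add_right volume x₀).setIntegral_preimage_emb
    (measurableEmbedding_addRight x₀)]
  simp only [Function.comp_apply, eval_shift, WithLp.ofLp_add]

end L2

section VectorCalculus

open Metric

def pgradₗ : MvPolynomial (Fin 3) ℝ →ₗ[ℝ] Fin 3 → MvPolynomial (Fin 3) ℝ :=
  LinearMap.pi fun i => (pderiv i).toLinearMap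

theorem pgradₗ_apply (p : MvPolynomial (Fin 3) ℝ) : pgradₗ p = pgrad p := rfl

def pcurlₗ : (Fin 3 → MvPolynomial (Fin 3) ℝ) →ₗ[ℝ] Fin 3 → MvPolynomial (Fin 3) ℝ :=
  LinearMap.pi fun i => (pderiv (i + 1)).toLinearMap ∘ₗ LinearMap.proj (i + 2) -
    (pderiv (i + 2)).toLinearMap ∘ₗ LinearMap.proj (i + 1)

theorem pcurlₗ_apply (v : Fin 3 → MvPolynomial (Fin 3) ℝ) : pcurlₗ v = pcurl v := rfl

theorem pcurl_pgrad (p : MvPolynomial (Fin 3) ℝ) : pcurl (pgrad p) = 0 :=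
  funext fun _ => sub_eq_zero.2 (pderiv_pderiv_comm _ _ p)

theorem pderiv_comm_of_pcurl_eq_zero {v : Fin 3 → MvPolynomial (Fin 3) ℝ} (h : pcurl v = 0)
    (i j : Fin 3) : pderiv i (v j) = pderiv j (v i) := by
  have h₀ : pderiv 1 (v 2) = pderiv 2 (v 1) := sub_eq_zero.1 (congrFun h 0)
  have h₁ : pderiv 2 (v 0) = pderiv 0 (v 2) := sub_eq_zero.1 (congrFun h 1)
  have h₂ : pderiv 0 (v 1) = pderiv 1 (v 0) := sub_eq_zero.1 (congrFun h 2)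
  fin_cases i <;> fin_cases j <;> first | rfl | assumption | (symm; assumption)

theorem mem_Gspace_of_pcurl_eq_zero {m : ℕ} {v : Fin 3 → MvPolynomial (Fin 3) ℝ}
    (hv : ∀ i, v i ∈ P3 m) (h : pcurl v = 0) : v ∈ Gspace m := by
  obtain ⟨p, hp, hpv⟩ :=
    exists_mem_restrictTotalDegree_pderiv_eq hv (pderiv_comm_of_pcurl_eq_zero h)
  exact ⟨p, hp, (funext hpv).symm⟩

theorem pcurl_comp_shift (c : Fin 3 → ℝ) (v : Fin 3 → MvPolynomial (Fin 3) ℝ) :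
    pcurl (shift c ∘ v) = shift c ∘ pcurl v :=
  funext fun i => by simp only [pcurl, Function.comp_apply, pderiv_shift, map_sub]

theorem sqL2_eq_l2Inner (T : Set (EuclideanSpace ℝ (Fin 3)))
    (v : Fin 3 → MvPolynomial (Fin 3) ℝ) : sqL2 T v = l2Inner T v v := by
  simp only [sqL2, l2Inner, sq]

theorem sqL2_preimage_add_right (T : Set (EuclideanSpace ℝ (Fin 3)))
    (x₀ : EuclideanSpace ℝ (Fin 3)) (v : Fin 3 → MvPolynomial (Fin 3) ℝ) :
    sqL2 ((· + x₀) ⁻¹' T) (shift (WithLp.ofLp x₀) ∘ v) = sqL2 T v := by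
  rw [sqL2_eq_l2Inner, sqL2_eq_l2Inner, l2Inner_preimage_add_right]

theorem comp_shift_mem_GspacePerp {T : Set (EuclideanSpace ℝ (Fin 3))} {m : ℕ}
    {r : Fin 3 → MvPolynomial (Fin 3) ℝ} (hr : r ∈ GspacePerp T m) (x₀ : EuclideanSpace ℝ (Fin 3)) :
    shift (WithLp.ofLp x₀) ∘ r ∈ GspacePerp ((· + x₀) ⁻¹' T) m := by
  refine ⟨fun i => shift_mem_restrictTotalDegree _ (hr.1 i), ?_⟩
  rintro _ ⟨p, hp, rfl⟩
  set c := WithLp.ofLp x₀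
  have hgrad : pgrad p = shift c ∘ pgrad (shift (-c) p) := by
    funext i
    rw [Function.comp_apply, pgrad, pgrad, pderiv_shift, shift_shift_neg]
  have := l2Inner_preimage_add_right T x₀ r (pgrad (shift (-c) p))
  rw [← hgrad] at this
  exact this.trans (hr.2 _ ⟨_, shift_mem_restrictTotalDegree _ hp, rfl⟩)

def fieldSubmodule (m : ℕ) : Submodule ℝ (Fin 3 → MvPolynomial (Fin 3) ℝ) :=
  Submodule.pi Set.univ fun _ => P3 m

instance (m : ℕ) : FiniteDimensional ℝ (fieldSubmodule m) := by
  rw [fieldSubmodule, ← Submodule.iSup_map_single]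
  infer_instance

def gradSubmodule (m : ℕ) : Submodule ℝ (Fin 3 → MvPolynomial (Fin 3) ℝ) :=
  (P3 (m + 1)).map pgradₗ

theorem mem_gradSubmodule {m : ℕ} {v : Fin 3 → MvPolynomial (Fin 3) ℝ} :
    v ∈ gradSubmodule m ↔ v ∈ Gspace m :=
  ⟨fun ⟨p, hp, hpv⟩ => ⟨p, hp, hpv.symm⟩, fun ⟨p, hp, hpv⟩ => ⟨p, hp, hpv.symm⟩⟩

theorem gradSubmodule_le_fieldSubmodule (m : ℕ) : gradSubmodule m ≤ fieldSubmodule m := by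
  rintro _ ⟨p, hp, rfl⟩ i -
  exact pderiv_mem_restrictTotalDegree hp

instance (m : ℕ) : FiniteDimensional ℝ (gradSubmodule m) :=
  Submodule.finiteDimensional_of_le (gradSubmodule_le_fieldSubmodule m)

theorem pcurl_sub_of_mem_gradSubmodule {m : ℕ} (r : Fin 3 → MvPolynomial (Fin 3) ℝ)
    {g : Fin 3 → MvPolynomial (Fin 3) ℝ} (hg : g ∈ gradSubmodule m) :
    pcurl (r - g) = pcurl r := by
  obtain ⟨p, -, rfl⟩ := hg
  rw [← pcurlₗ_apply, map_sub, pcurlₗ_apply, pcurlₗ_apply, pgradₗ_apply, pcurl_pgrad, sub_zero]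

theorem exists_l2Inner_le_mul_l2Inner_pcurl (m : ℕ) {ρ : ℝ} (hρ : 0 < ρ) :
    ∃ C : ℝ, 0 < C ∧ ∀ s ∈ fieldSubmodule m ⊓
      (l2Form (ball (0 : EuclideanSpace ℝ (Fin 3)) ρ) isBounded_ball).orthogonal (gradSubmodule m),
      l2Inner (ball 0 1) s s ≤ C * l2Inner (ball 0 ρ) (pcurl s) (pcurl s) := by
  set Bρ := l2Form (ι := Fin 3) (ball (0 : EuclideanSpace ℝ (Fin 3)) ρ) isBounded_ball
  set K := fieldSubmodule m ⊓ Bρ.orthogonal (gradSubmodule m)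
  have hBρ : ∀ v, Bρ v v = 0 → v = 0 := fun v =>
    eq_zero_of_l2Inner_self_eq_zero isOpen_ball (nonempty_ball.2 hρ) isBounded_ball
  -- On `K`, a vanishing curl forces `s` to be a gradient orthogonal to itself.
  have hcurl : ∀ s : K, (Bρ.comp pcurlₗ pcurlₗ).restrict K s s = 0 → s = 0 := by
    intro s hs
    obtain ⟨hsW, hsorth⟩ := Submodule.mem_inf.1 s.2
    have hsG : (s : Fin 3 → MvPolynomial (Fin 3) ℝ) ∈ gradSubmodule m :=
      mem_gradSubmodule.2 (mem_Gspace_of_pcurl_eq_zero (fun i => hsW i trivial) (hBρ _ hs))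
    exact Subtype.ext (hBρ _ (hsorth _ hsG))
  obtain ⟨C, hC, hle⟩ := LinearMap.BilinForm.exists_apply_self_le_mul
    ((l2Form (ball 0 1) isBounded_ball).restrict K) ((Bρ.comp pcurlₗ pcurlₗ).restrict K)
    ⟨fun v w => l2Inner_comm _ _ _⟩ (fun v => l2Inner_self_nonneg _ _) hcurl
  exact ⟨C, hC, fun s hs => hle ⟨s, hs⟩⟩

theorem exists_sqL2_le_mul_sqL2_pcurl (m : ℕ) {ρ : ℝ} (hρ : 0 < ρ) :
    ∃ C : ℝ, 0 < C ∧ ∀ T : Set (EuclideanSpace ℝ (Fin 3)), ball 0 ρ ⊆ T → T ⊆ ball 0 1 →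
      ∀ r ∈ GspacePerp T m, sqL2 T r ≤ C * sqL2 T (pcurl r) := by
  obtain ⟨C, hC, hK⟩ := exists_l2Inner_le_mul_l2Inner_pcurl m hρ
  refine ⟨C, hC, fun T hρT hT1 r hr => ?_⟩
  have hT := isBounded_ball.subset hT1
  obtain ⟨g, hg, hrg⟩ := LinearMap.BilinForm.exists_sub_mem_orthogonal
    (B := l2Form (ball 0 ρ) isBounded_ball) (G := gradSubmodule m)
    (fun v _ => eq_zero_of_l2Inner_self_eq_zero isOpen_ball (nonempty_ball.2 hρ)
      isBounded_ball) r
  have hrW : r ∈ fieldSubmodule m := fun i _ => hr.1 i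
  calc sqL2 T r = l2Inner T r r := sqL2_eq_l2Inner T r
    _ ≤ l2Inner T (r - g) (r - g) :=
      LinearMap.BilinForm.apply_self_le_apply_sub_self (l2Form_isSymm hT)
        (hr.2 g (mem_gradSubmodule.1 hg)) (l2Inner_self_nonneg T g)
    _ ≤ l2Inner (ball 0 1) (r - g) (r - g) := l2Inner_self_mono hT1 isBounded_ball _
    _ ≤ C * l2Inner (ball 0 ρ) (pcurl (r - g)) (pcurl (r - g)) :=
      hK _ (Submodule.mem_inf.2 ⟨sub_mem hrW (gradSubmodule_le_fieldSubmodule m hg), hrg⟩)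
    _ ≤ C * sqL2 T (pcurl r) := by
      rw [pcurl_sub_of_mem_gradSubmodule r hg, sqL2_eq_l2Inner]
      exact mul_le_mul_of_nonneg_left (l2Inner_self_mono hρT hT _) hC.le

end VectorCalculus

theorem stmt3 (ℓ : ℕ) (ρ : ℝ) (hρ : 0 < ρ) :
    ∃ C : ℝ, 0 < C ∧
      ∀ (T : Set (EuclideanSpace ℝ (Fin 3))) (x₀ : EuclideanSpace ℝ (Fin 3)),
        IsOpen T → T.Nonempty → Bornology.IsBounded T → Metric.diam T = 1 →
        Metric.ball x₀ ρ ⊆ T → T ⊆ Metric.ball x₀ 1 →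
        ∀ r ∈ GspacePerp T (ℓ + 1),
          Real.sqrt (sqL2 T r) ≤ C * Real.sqrt (sqL2 T (pcurl r)) := by
  obtain ⟨C, hC, hcentered⟩ := exists_sqL2_le_mul_sqL2_pcurl (ℓ + 1) hρ
  refine ⟨√C, Real.sqrt_pos.2 hC, fun T x₀ _ _ _ _ hρT hT1 r hr => ?_⟩
  have key := hcentered ((· + x₀) ⁻¹' T)
    (by simpa [Metric.preimage_add_right_ball] using Set.preimage_mono (f := (· + x₀)) hρT)
    (by simpa [Metric.preimage_add_right_ball] using Set.preimage_mono (f := (· + x₀)) hT1)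
    _ (comp_shift_mem_GspacePerp hr x₀)
  rw [pcurl_comp_shift, sqL2_preimage_add_right, sqL2_preimage_add_right] at key
  rw [← Real.sqrt_mul hC.le]
  exact Real.sqrt_le_sqrt key
end
end
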